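/- arXiv:1311.3069 — 4 statements merged into one kernel-verified Lean document; each statement's English description precedes it below -/
import Mathlib

section
/- Let β_n < 0 and β₁, β₂ ∈ ℝ satisfy β₁ − β_n > 0, β₂ − β_n > 0 and β₁ + β₂ − β_n > 0, and let f, g : ℝ → ℝ be continuous with polynomial growth on (−∞,0]. Then the function τ ↦ e^{−β_n τ} · (∫_τ^0 e^{β₁(τ−τ′)} f(τ′) dτ′) · (∫_τ^0 e^{β₂(τ−τ′)} g(τ′) dτ′) is integrable on (−∞,0]. -/
/-! Each memory integral `∫_τ^0 e^{β(τ-τ')} f(τ') dτ'` is at most `C e^{min(β,0) τ} (1-τ)^{k+1}`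
for `τ ≤ 0`, so the integrand is dominated by a polynomial times `e^{cτ}` with
`c = -β_n + min(β₁,0) + min(β₂,0)`. This `c` is the least of `-β_n`, `β₁ - β_n`, `β₂ - β_n` and
`β₁ + β₂ - β_n`, hence positive, and a polynomial times `e^{cτ}` is integrable on `(-∞, 0]`. -/

open MeasureTheory Real intervalIntegral Set Filter Asymptotics

theorem isBigO_one_sub_pow_exp_neg_mul_atBot (k : ℕ) {b : ℝ} (hb : 0 < b) :
    (fun τ : ℝ => (1 - τ) ^ k) =O[atBot] fun τ => exp (-b * τ) := by
  have hlin : (fun x : ℝ => 1 + x) =O[atTop] fun x => x :=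
    IsBigO.of_bound 2 <| (eventually_ge_atTop 1).mono fun x hx => by
      rw [norm_of_nonneg (by linarith), norm_of_nonneg (by linarith)]; linarith
  have hpoly := (hlin.pow k).trans (isLittleO_pow_exp_pos_mul_atTop k hb).isBigO
  refine (hpoly.comp_tendsto tendsto_neg_atBot_atTop).congr' ?_ ?_ <;>
    exact Eventually.of_forall fun τ => by simp [sub_eq_add_neg]

theorem integrableOn_Iic_exp_mul_mul_one_sub_pow {c : ℝ} (hc : 0 < c) (k : ℕ) (a : ℝ) :
    IntegrableOn (fun τ => exp (c * τ) * (1 - τ) ^ k) (Iic a) := by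
  have hlocal : LocallyIntegrableOn (fun τ => exp (c * τ) * (1 - τ) ^ k) (Iic a) :=
    (Continuous.locallyIntegrable (by fun_prop)).locallyIntegrableOn _
  refine hlocal.integrableOn_of_isBigO_atBot (g := fun τ => exp (c / 2 * τ)) ?_
    ⟨Iic a, Iic_mem_atBot a, integrableOn_exp_mul_Iic (half_pos hc) a⟩
  refine ((isBigO_refl (fun τ => exp (c * τ)) atBot).mul
    (isBigO_one_sub_pow_exp_neg_mul_atBot k (half_pos hc))).congr_right fun τ => ?_
  rw [← exp_add]; ring_nf

theorem exp_mul_sub_le_exp_min_mul {β τ x : ℝ} (hτx : τ ≤ x) (hx : x ≤ 0) :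
    exp (β * (τ - x)) ≤ exp (min β 0 * τ) := by
  rcases le_total β 0 with h | h
  · rw [min_eq_left h]; exact exp_le_exp.mpr (by nlinarith)
  · rw [min_eq_right h]; exact exp_le_exp.mpr (by nlinarith)

noncomputable def memoryIntegral (β : ℝ) (f : ℝ → ℝ) (τ : ℝ) : ℝ :=
  ∫ τ' in τ..0, exp (β * (τ - τ')) * f τ'

theorem continuous_memoryIntegral (β : ℝ) {f : ℝ → ℝ} (hf : Continuous f) :
    Continuous (memoryIntegral β f) := by
  have hprim : Continuous fun p : ℝ × ℝ => ∫ τ' in (0:ℝ)..p.2, exp (β * (p.1 - τ')) * f τ' :=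
    continuous_parametric_primitive_of_continuous
      (f := fun p τ' => exp (β * (p - τ')) * f τ') (by simp only [Function.uncurry_def]; fun_prop)
  refine (hprim.comp (continuous_id.prodMk continuous_id)).neg.congr fun τ => ?_
  simp [memoryIntegral, integral_symm τ]

theorem abs_memoryIntegral_le {β C : ℝ} {k : ℕ} {f : ℝ → ℝ} (hC : 0 ≤ C)
    (hf : ∀ x ≤ (0:ℝ), |f x| ≤ C * (1 + |x|) ^ k) {τ : ℝ} (hτ : τ ≤ 0) :
    |memoryIntegral β f τ| ≤ C * exp (min β 0 * τ) * (1 - τ) ^ (k + 1) := by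
  have h1τ : 0 ≤ 1 - τ := by linarith
  have hintegrand : ∀ x ∈ uIoc τ 0, ‖exp (β * (τ - x)) * f x‖ ≤
      C * exp (min β 0 * τ) * (1 - τ) ^ k := by
    intro x hx
    rw [uIoc_of_le hτ] at hx
    have hfx : |f x| ≤ C * (1 - τ) ^ k :=
      (hf x hx.2).trans (by gcongr; rw [abs_of_nonpos hx.2]; linarith [hx.1])
    rw [norm_mul, norm_of_nonneg (exp_pos _).le, Real.norm_eq_abs]
    calc exp (β * (τ - x)) * |f x| ≤ exp (min β 0 * τ) * (C * (1 - τ) ^ k) :=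
          mul_le_mul (exp_mul_sub_le_exp_min_mul hx.1.le hx.2) hfx (abs_nonneg _) (exp_pos _).le
      _ = _ := by ring
  calc |memoryIntegral β f τ| ≤ C * exp (min β 0 * τ) * (1 - τ) ^ k * |0 - τ| :=
        norm_integral_le_of_norm_le_const hintegrand
    _ ≤ C * exp (min β 0 * τ) * (1 - τ) ^ k * (1 - τ) := by
        gcongr; rw [abs_of_nonneg (by linarith)]; linarith
    _ = _ := by ring

theorem neg_add_min_add_min_pos {βn β₁ β₂ : ℝ} (hβn : βn < 0) (hgap₁ : 0 < β₁ - βn)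
    (hgap₂ : 0 < β₂ - βn) (hgap₁₂ : 0 < β₁ + β₂ - βn) :
    0 < -βn + min β₁ 0 + min β₂ 0 := by
  rcases min_cases β₁ 0 with ⟨h₁, _⟩ | ⟨h₁, _⟩ <;> rcases min_cases β₂ 0 with ⟨h₂, _⟩ | ⟨h₂, _⟩ <;>
    rw [h₁, h₂] <;> linarith

theorem abs_exp_mul_memoryIntegral_mul_memoryIntegral_le {βn β₁ β₂ C₁ C₂ : ℝ} {k₁ k₂ : ℕ}
    {f g : ℝ → ℝ} (hC₁ : 0 ≤ C₁) (hC₂ : 0 ≤ C₂)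
    (hf : ∀ x ≤ (0:ℝ), |f x| ≤ C₁ * (1 + |x|) ^ k₁)
    (hg : ∀ x ≤ (0:ℝ), |g x| ≤ C₂ * (1 + |x|) ^ k₂) {τ : ℝ} (hτ : τ ≤ 0) :
    |exp (-βn * τ) * memoryIntegral β₁ f τ * memoryIntegral β₂ g τ| ≤
      C₁ * C₂ * (exp ((-βn + min β₁ 0 + min β₂ 0) * τ) * (1 - τ) ^ (k₁ + k₂ + 2)) := by
  have h1τ : 0 ≤ 1 - τ := by linarith
  rw [abs_mul, abs_mul, abs_exp]
  calc exp (-βn * τ) * |memoryIntegral β₁ f τ| * |memoryIntegral β₂ g τ|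
      ≤ exp (-βn * τ) * (C₁ * exp (min β₁ 0 * τ) * (1 - τ) ^ (k₁ + 1)) *
          (C₂ * exp (min β₂ 0 * τ) * (1 - τ) ^ (k₂ + 1)) := by
        gcongr
        · exact abs_memoryIntegral_le hC₁ hf hτ
        · exact abs_memoryIntegral_le hC₂ hg hτ
    _ = _ := by rw [add_mul, add_mul, exp_add, exp_add]; ring

/-- With `β_n < 0`, `β₁ - β_n > 0`, `β₂ - β_n > 0`, `β₁ + β₂ - β_n > 0`,
and `f, g` continuous of polynomial growth on `(-∞, 0]`, the function
`τ ↦ exp (-β_n τ) * (∫_τ^0 exp (β₁ (τ - τ')) f τ' dτ') * (∫_τ^0 exp (β₂ (τ - τ')) g τ' dτ')`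
is integrable on `(-∞, 0]`. -/
theorem integrable_double_memory_kernel_of_polyGrowth
    (βn β₁ β₂ : ℝ) (hβn : βn < 0)
    (hgap₁ : 0 < β₁ - βn) (hgap₂ : 0 < β₂ - βn) (hgap₁₂ : 0 < β₁ + β₂ - βn)
    (f g : ℝ → ℝ) (hf_cont : Continuous f) (hg_cont : Continuous g)
    (hf_growth : ∃ C > (0:ℝ), ∃ k : ℕ, ∀ τ ≤ (0:ℝ), |f τ| ≤ C * (1 + |τ|) ^ k)
    (hg_growth : ∃ C > (0:ℝ), ∃ k : ℕ, ∀ τ ≤ (0:ℝ), |g τ| ≤ C * (1 + |τ|) ^ k) :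
    IntegrableOn
      (fun τ => Real.exp (-βn * τ) *
        (∫ τ' in τ..0, Real.exp (β₁ * (τ - τ')) * f τ') *
        (∫ τ' in τ..0, Real.exp (β₂ * (τ - τ')) * g τ'))
      (Set.Iic 0) := by
  obtain ⟨C₁, hC₁, k₁, hf⟩ := hf_growth
  obtain ⟨C₂, hC₂, k₂, hg⟩ := hg_growth
  have hc := neg_add_min_add_min_pos hβn hgap₁ hgap₂ hgap₁₂
  refine Integrable.mono'
    ((integrableOn_Iic_exp_mul_mul_one_sub_pow hc (k₁ + k₂ + 2) 0).const_mul (C₁ * C₂)) ?_ ?_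
  · exact (((continuous_exp.comp (continuous_const_mul (-βn))).mul
      (continuous_memoryIntegral β₁ hf_cont)).mul
      (continuous_memoryIntegral β₂ hg_cont)).aestronglyMeasurable
  · filter_upwards [ae_restrict_mem measurableSet_Iic] with τ hτ
    exact abs_exp_mul_memoryIntegral_mul_memoryIntegral_le hC₁.le hC₂.le hf hg hτ
end

section
/- Let β_n < 0 and β₁, β₂ ∈ ℝ satisfy β₁ + β₂ − β_n > 0, β₁ − β_n > 0 and β₂ − β_n > 0. Let σ₁, σ₂, ξ₁, ξ₂ ∈ ℝ and let W₁, W₂ : ℝ → ℝ be continuous with W_i(0) = 0 and polynomial growth on (−∞,0]. For i = 1, 2 set u_i(τ) := e^{τβ_i} ξ_i + σ_i W_i(τ) − σ_i β_i ∫_τ^0 e^{(τ−τ′)β_i} W_i(τ′) dτ′. Then τ ↦ e^{−β_n τ} u₁(τ) u₂(τ) is integrable on (−∞,0], and ∫_{−∞}^0 e^{−β_n τ} u₁(τ) u₂(τ) dτ = A + B ξ₁ + C ξ₂ + ξ₁ ξ₂ / (β₁ + β₂ − β_n), where A = σ₁σ₂ ∫_{−∞}^0 e^{−β_n τ} W₁(τ)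 W₂(τ) dτ − σ₁σ₂ β₂ ∫_{−∞}^0 e^{−β_n τ} W₁(τ) (∫_τ^0 e^{(τ−τ′)β₂} W₂(τ′) dτ′) dτ − σ₁σ₂ β₁ ∫_{−∞}^0 e^{−β_n τ} W₂(τ) (∫_τ^0 e^{(τ−τ′)β₁} W₁(τ′) dτ′) dτ + σ₁σ₂ β₁β₂ ∫_{−∞}^0 e^{−β_n τ} (∫_τ^0 e^{(τ−τ′)β₁} W₁(τ′) dτ′)(∫_τ^0 e^{(τ−τ′)β₂} W₂(τ′) dτ′) dτ, B = σ₂ ∫_{−∞}^0 e^{(β₁−β_n)τ} W₂(τ) dτ − σ₂ β₂ ∫_{−∞}^0 e^{(β₁−β_n)τ} (∫_τ^0 e^{(τ−τ′)β₂} W₂(τ′) dτ′) dτ, and C = σ₁ ∫_{−∞}^0 e^{(β₂−β_n)τ} W₁(τ) dτ − σ₁ β₁ ∫_{−∞}^0 e^{(β₂−β_n)τ} (∫_τ^0 e^{(τ−τ′)β₁} W₁(τ′) dτ′) dτ, all integrals being absolutely convergent. -/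
/-!
Write `u_i = e^{β_i τ} ξ_i + σ_i W_i - σ_i β_i G_i` with `G_i τ = ∫_τ^0 e^{(τ-τ')β_i} W_i τ' dτ'`.
On `(-∞, 0]`, `W_i` is bounded by a polynomial in `τ` and `G_i` by a polynomial times
`e^{min(β_i, 0) τ}`, so every term of the product `e^{-β_n τ} u₁ u₂` is bounded by a polynomial
times `e^{c τ}` where, by the non-resonance conditions, `c > 0`. Such functions are integrable on
`(-∞, 0]`, so the integral splits term by term, and the `ξ₁ ξ₂` term integrates to
`1 / (β₁ + β₂ - β_n)`.
-/

open MeasureTheory Real intervalIntegral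

def PolyExpBounded (c : ℝ) (f : ℝ → ℝ) : Prop :=
  ∃ C : ℝ, ∃ k : ℕ, ∀ τ ≤ 0, |f τ| ≤ C * (1 - τ) ^ k * exp (c * τ)

noncomputable def backwardConv (β : ℝ) (W : ℝ → ℝ) (τ : ℝ) : ℝ :=
  ∫ τ' in τ..0, exp ((τ - τ') * β) * W τ'

@[fun_prop]
lemma continuous_backwardConv (β : ℝ) {W : ℝ → ℝ} (hW : Continuous W) :
    Continuous (backwardConv β W) := by
  have h : Continuous fun τ => ∫ τ' in (0:ℝ)..τ, exp ((τ - τ') * β) * W τ' :=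
    continuous_parametric_intervalIntegral_of_continuous (by fun_prop) continuous_id
  exact h.neg.congr fun τ => (integral_symm 0 τ).symm

lemma pow_le_factorial_div_pow_mul_exp {x ε : ℝ} (hx : 0 ≤ x) (hε : 0 < ε) (k : ℕ) :
    x ^ k ≤ k.factorial / ε ^ k * exp (ε * x) := by
  have h := pow_div_factorial_le_exp (ε * x) (by positivity) k
  rw [div_le_iff₀ (by positivity), mul_pow] at h
  rw [div_mul_eq_mul_div, le_div_iff₀ (by positivity)]
  linarith

lemma add_min_pos {a b c : ℝ} (hb : 0 < a + b) (hc : 0 < a + c) : 0 < a + min b c :=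
  min_add_add_left a b c ▸ lt_min hb hc

lemma nonneg_of_abs_le_mul_pow_mul_exp {c C : ℝ} {k : ℕ} {f : ℝ → ℝ}
    (h : ∀ τ ≤ 0, |f τ| ≤ C * (1 - τ) ^ k * exp (c * τ)) : 0 ≤ C :=
  (abs_nonneg _).trans (by simpa using h 0 le_rfl)

-- The left-hand side is affine in `τ'`, so it is largest at `τ' = τ` or at `τ' = 0`.
lemma sub_mul_add_mul_le_min_mul {β c τ τ' : ℝ} (h₁ : τ ≤ τ') (h₂ : τ' ≤ 0) :
    (τ - τ') * β + c * τ' ≤ min β c * τ := by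
  nlinarith [mul_nonpos_of_nonpos_of_nonneg (sub_nonpos.2 h₁) (sub_nonneg.2 (min_le_left β c)),
    mul_nonpos_of_nonpos_of_nonneg h₂ (sub_nonneg.2 (min_le_right β c))]

namespace PolyExpBounded

lemma of_abs_le_pow {W : ℝ → ℝ} {C : ℝ} {k : ℕ} (h : ∀ τ ≤ 0, |W τ| ≤ C * (1 + |τ|) ^ k) :
    PolyExpBounded 0 W :=
  ⟨C, k, fun τ hτ => by simpa [abs_of_nonpos hτ, ← sub_eq_add_neg] using h τ hτ⟩

lemma exp (c : ℝ) : PolyExpBounded c fun τ => Real.exp (c * τ) :=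
  ⟨1, 0, fun τ _ => by simp [abs_of_pos (Real.exp_pos _)]⟩

lemma mul {a b : ℝ} {f g : ℝ → ℝ} (hf : PolyExpBounded a f) (hg : PolyExpBounded b g) :
    PolyExpBounded (a + b) fun τ => f τ * g τ := by
  obtain ⟨C₁, k₁, hf⟩ := hf
  obtain ⟨C₂, k₂, hg⟩ := hg
  refine ⟨C₁ * C₂, k₁ + k₂, fun τ hτ => ?_⟩
  calc |f τ * g τ|
        ≤ (C₁ * (1 - τ) ^ k₁ * Real.exp (a * τ)) * (C₂ * (1 - τ) ^ k₂ * Real.exp (b * τ)) := by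
        rw [abs_mul]
        exact mul_le_mul (hf τ hτ) (hg τ hτ) (abs_nonneg _) ((abs_nonneg _).trans (hf τ hτ))
    _ = C₁ * C₂ * (1 - τ) ^ (k₁ + k₂) * Real.exp ((a + b) * τ) := by
        rw [add_mul, Real.exp_add, pow_add]; ring

lemma backwardConv {c : ℝ} {W : ℝ → ℝ} (hW : PolyExpBounded c W) (β : ℝ) :
    PolyExpBounded (min β c) (backwardConv β W) := by
  obtain ⟨C, k, hW⟩ := hW
  refine ⟨C, k + 1, fun τ hτ => ?_⟩
  have hC := nonneg_of_abs_le_mul_pow_mul_exp hW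
  set B := C * (1 - τ) ^ k * Real.exp (min β c * τ)
  have hB : 0 ≤ B := mul_nonneg (mul_nonneg hC (pow_nonneg (by linarith) _)) (Real.exp_pos _).le
  have hpt : ∀ τ' ∈ Set.uIoc τ 0, ‖Real.exp ((τ - τ') * β) * W τ'‖ ≤ B := by
    rintro τ' ⟨hττ', hτ'0⟩
    rw [min_eq_left hτ] at hττ'
    rw [max_eq_right hτ] at hτ'0
    calc ‖Real.exp ((τ - τ') * β) * W τ'‖
        ≤ Real.exp ((τ - τ') * β) * (C * (1 - τ') ^ k * Real.exp (c * τ')) := by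
          rw [norm_mul, Real.norm_of_nonneg (Real.exp_pos _).le, Real.norm_eq_abs]
          exact mul_le_mul_of_nonneg_left (hW τ' hτ'0) (Real.exp_pos _).le
      _ = C * (1 - τ') ^ k * Real.exp ((τ - τ') * β + c * τ') := by
          rw [Real.exp_add]; ring
      _ ≤ B := by
          refine mul_le_mul (by gcongr; linarith)
            (exp_le_exp.2 (sub_mul_add_mul_le_min_mul hττ'.le hτ'0)) (Real.exp_pos _).le
            (mul_nonneg hC (pow_nonneg (by linarith) _))
  calc |_root_.backwardConv β W τ| ≤ B * |0 - τ| := norm_integral_le_of_norm_le_const hpt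
    _ ≤ B * (1 - τ) := by
        rw [zero_sub, abs_neg, abs_of_nonpos hτ]
        exact mul_le_mul_of_nonneg_left (by linarith) hB
    _ = C * (1 - τ) ^ (k + 1) * Real.exp (min β c * τ) := by ring

-- Half of the decay rate absorbs the polynomial factor.
lemma integrableOn_Iic {c : ℝ} {f : ℝ → ℝ} (hf : PolyExpBounded c f) (hc : 0 < c)
    (hmeas : AEStronglyMeasurable f (volume.restrict (Set.Iic 0))) :
    IntegrableOn f (Set.Iic 0) := by
  obtain ⟨C, k, hf⟩ := hf
  have hC := nonneg_of_abs_le_mul_pow_mul_exp hf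
  refine Integrable.mono' ((integrableOn_exp_mul_Iic (half_pos hc) 0).const_mul
    (C * (k.factorial / (c / 2) ^ k * Real.exp (c / 2)))) hmeas ?_
  rw [ae_restrict_iff' measurableSet_Iic]
  refine .of_forall fun τ (hτ : τ ≤ 0) => ?_
  calc ‖f τ‖ ≤ C * (1 - τ) ^ k * Real.exp (c * τ) := hf τ hτ
    _ ≤ C * (k.factorial / (c / 2) ^ k * Real.exp (c / 2 * (1 - τ))) * Real.exp (c * τ) := by
        gcongr
        exact pow_le_factorial_div_pow_mul_exp (by linarith) (half_pos hc) k
    _ = C * (k.factorial / (c / 2) ^ k * Real.exp (c / 2)) * Real.exp (c / 2 * τ) := by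
        simp only [mul_assoc, ← Real.exp_add]
        ring_nf

end PolyExpBounded

lemma exp_mul_mul_expansion (βn β₁ β₂ σ₁ σ₂ ξ₁ ξ₂ w₁ w₂ g₁ g₂ τ : ℝ) :
    exp (-βn * τ) * (exp (τ * β₁) * ξ₁ + σ₁ * w₁ - σ₁ * β₁ * g₁)
        * (exp (τ * β₂) * ξ₂ + σ₂ * w₂ - σ₂ * β₂ * g₂)
      = σ₁ * σ₂ * (exp (-βn * τ) * w₁ * w₂) - σ₁ * σ₂ * β₂ * (exp (-βn * τ) * w₁ * g₂)
          - σ₁ * σ₂ * β₁ * (exp (-βn * τ) * w₂ * g₁)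
          + σ₁ * σ₂ * β₁ * β₂ * (exp (-βn * τ) * g₁ * g₂)
        + (σ₂ * (exp ((β₁ - βn) * τ) * w₂) - σ₂ * β₂ * (exp ((β₁ - βn) * τ) * g₂)) * ξ₁
        + (σ₁ * (exp ((β₂ - βn) * τ) * w₁) - σ₁ * β₁ * (exp ((β₂ - βn) * τ) * g₁)) * ξ₂
        + ξ₁ * ξ₂ * exp ((β₁ + β₂ - βn) * τ) := by
  have e₁ : exp ((β₁ - βn) * τ) = exp (-βn * τ) * exp (τ * β₁) := by rw [← exp_add]; ring_nf
  have e₂ : exp ((β₂ - βn) * τ) = exp (-βn * τ) * exp (τ * β₂) := by rw [← exp_add]; ring_nf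
  have e₁₂ : exp ((β₁ + β₂ - βn) * τ) = exp (-βn * τ) * exp (τ * β₁) * exp (τ * β₂) := by
    rw [← exp_add, ← exp_add]; ring_nf
  rw [e₁, e₂, e₁₂]
  ring

theorem pm_expansion_scalar_general
    (βn β₁ β₂ : ℝ) (hβn : βn < 0)
    (hgap₁₂ : 0 < β₁ + β₂ - βn) (hgap₁ : 0 < β₁ - βn) (hgap₂ : 0 < β₂ - βn)
    (σ₁ σ₂ ξ₁ ξ₂ : ℝ)
    (W₁ W₂ : ℝ → ℝ) (hW₁_cont : Continuous W₁) (hW₂_cont : Continuous W₂)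
    (hW₁_growth : ∃ C > (0:ℝ), ∃ k : ℕ, ∀ τ ≤ (0:ℝ), |W₁ τ| ≤ C * (1 + |τ|) ^ k)
    (hW₂_growth : ∃ C > (0:ℝ), ∃ k : ℕ, ∀ τ ≤ (0:ℝ), |W₂ τ| ≤ C * (1 + |τ|) ^ k)
    (u₁ u₂ : ℝ → ℝ)
    (hu₁ : ∀ τ, u₁ τ = Real.exp (τ * β₁) * ξ₁ + σ₁ * W₁ τ
      - σ₁ * β₁ * ∫ τ' in τ..0, Real.exp ((τ - τ') * β₁) * W₁ τ')
    (hu₂ : ∀ τ, u₂ τ = Real.exp (τ * β₂) * ξ₂ + σ₂ * W₂ τ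
      - σ₂ * β₂ * ∫ τ' in τ..0, Real.exp ((τ - τ') * β₂) * W₂ τ') :
    IntegrableOn (fun τ => Real.exp (-βn * τ) * u₁ τ * u₂ τ) (Set.Iic 0) ∧
    IntegrableOn (fun τ => Real.exp (-βn * τ) * W₁ τ * W₂ τ) (Set.Iic 0) ∧
    IntegrableOn (fun τ => Real.exp (-βn * τ) * W₁ τ *
      ∫ τ' in τ..0, Real.exp ((τ - τ') * β₂) * W₂ τ') (Set.Iic 0) ∧
    IntegrableOn (fun τ => Real.exp (-βn * τ) * W₂ τ *
      ∫ τ' in τ..0, Real.exp ((τ - τ') * β₁) * W₁ τ') (Set.Iic 0) ∧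
    IntegrableOn (fun τ => Real.exp (-βn * τ) *
      (∫ τ' in τ..0, Real.exp ((τ - τ') * β₁) * W₁ τ') *
      (∫ τ' in τ..0, Real.exp ((τ - τ') * β₂) * W₂ τ')) (Set.Iic 0) ∧
    IntegrableOn (fun τ => Real.exp ((β₁ - βn) * τ) * W₂ τ) (Set.Iic 0) ∧
    IntegrableOn (fun τ => Real.exp ((β₁ - βn) * τ) *
      ∫ τ' in τ..0, Real.exp ((τ - τ') * β₂) * W₂ τ') (Set.Iic 0) ∧
    IntegrableOn (fun τ => Real.exp ((β₂ - βn) * τ) * W₁ τ) (Set.Iic 0) ∧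
    IntegrableOn (fun τ => Real.exp ((β₂ - βn) * τ) *
      ∫ τ' in τ..0, Real.exp ((τ - τ') * β₁) * W₁ τ') (Set.Iic 0) ∧
    (∫ τ in Set.Iic (0:ℝ), Real.exp (-βn * τ) * u₁ τ * u₂ τ)
      = (σ₁ * σ₂ * (∫ τ in Set.Iic (0:ℝ), Real.exp (-βn * τ) * W₁ τ * W₂ τ)
          - σ₁ * σ₂ * β₂ * (∫ τ in Set.Iic (0:ℝ), Real.exp (-βn * τ) * W₁ τ *
              ∫ τ' in τ..0, Real.exp ((τ - τ') * β₂) * W₂ τ')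
          - σ₁ * σ₂ * β₁ * (∫ τ in Set.Iic (0:ℝ), Real.exp (-βn * τ) * W₂ τ *
              ∫ τ' in τ..0, Real.exp ((τ - τ') * β₁) * W₁ τ')
          + σ₁ * σ₂ * β₁ * β₂ * (∫ τ in Set.Iic (0:ℝ), Real.exp (-βn * τ) *
              (∫ τ' in τ..0, Real.exp ((τ - τ') * β₁) * W₁ τ') *
              (∫ τ' in τ..0, Real.exp ((τ - τ') * β₂) * W₂ τ')))
        + (σ₂ * (∫ τ in Set.Iic (0:ℝ), Real.exp ((β₁ - βn) * τ) * W₂ τ)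
            - σ₂ * β₂ * (∫ τ in Set.Iic (0:ℝ), Real.exp ((β₁ - βn) * τ) *
                ∫ τ' in τ..0, Real.exp ((τ - τ') * β₂) * W₂ τ')) * ξ₁
        + (σ₁ * (∫ τ in Set.Iic (0:ℝ), Real.exp ((β₂ - βn) * τ) * W₁ τ)
            - σ₁ * β₁ * (∫ τ in Set.Iic (0:ℝ), Real.exp ((β₂ - βn) * τ) *
                ∫ τ' in τ..0, Real.exp ((τ - τ') * β₁) * W₁ τ')) * ξ₂
        + ξ₁ * ξ₂ / (β₁ + β₂ - βn) := by
  simp only [← backwardConv.eq_1] at hu₁ hu₂ ⊢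
  obtain ⟨C₁, -, k₁, hW₁⟩ := hW₁_growth
  obtain ⟨C₂, -, k₂, hW₂⟩ := hW₂_growth
  replace hW₁ := PolyExpBounded.of_abs_le_pow hW₁
  replace hW₂ := PolyExpBounded.of_abs_le_pow hW₂
  have hE := PolyExpBounded.exp
  have r₁ : 0 < -βn + 0 + min β₁ 0 := add_min_pos (by linarith) (by linarith)
  have r₂ : 0 < -βn + 0 + min β₂ 0 := add_min_pos (by linarith) (by linarith)
  have r₁' : 0 < β₂ - βn + min β₁ 0 := add_min_pos (by linarith) (by linarith)
  have r₂' : 0 < β₁ - βn + min β₂ 0 := add_min_pos (by linarith) (by linarith)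
  have r₁₂ : 0 < -βn + min β₁ 0 + min β₂ 0 := add_min_pos (by linarith) (by linarith)
  have i1 := (hE (-βn) |>.mul hW₁ |>.mul hW₂).integrableOn_Iic (by linarith) (by fun_prop)
  have i2 := (hE (-βn) |>.mul hW₁ |>.mul (hW₂.backwardConv β₂)).integrableOn_Iic r₂ (by fun_prop)
  have i3 := (hE (-βn) |>.mul hW₂ |>.mul (hW₁.backwardConv β₁)).integrableOn_Iic r₁ (by fun_prop)
  have i4 := (hE (-βn) |>.mul (hW₁.backwardConv β₁) |>.mul (hW₂.backwardConv β₂)).integrableOn_Iic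
    r₁₂ (by fun_prop)
  have i5 := (hE (β₁ - βn) |>.mul hW₂).integrableOn_Iic (by linarith) (by fun_prop)
  have i6 := (hE (β₁ - βn) |>.mul (hW₂.backwardConv β₂)).integrableOn_Iic r₂' (by fun_prop)
  have i7 := (hE (β₂ - βn) |>.mul hW₁).integrableOn_Iic (by linarith) (by fun_prop)
  have i8 := (hE (β₂ - βn) |>.mul (hW₁.backwardConv β₁)).integrableOn_Iic r₁' (by fun_prop)
  have i9 := integrableOn_exp_mul_Iic hgap₁₂ 0
  simp_rw [hu₁, hu₂, exp_mul_mul_expansion]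
  -- `fun_prop` knows `Integrable` but not `IntegrableOn`.
  unfold IntegrableOn at *
  refine ⟨by fun_prop, i1, i2, i3, i4, i5, i6, i7, i8, ?_⟩
  simp (disch := fun_prop) only [MeasureTheory.integral_add, MeasureTheory.integral_sub,
    MeasureTheory.integral_const_mul, MeasureTheory.integral_mul_const,
    integral_exp_mul_Iic hgap₁₂, mul_zero, exp_zero, mul_one_div]

/-- Scalar form of the analytic expansion of the pullback-limit
parameterizing-manifold function. Under the non-resonance conditions, the product
`exp (-β_n τ) u₁ τ u₂ τ` is integrable on `(-∞, 0]`, all the integrals defining the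
random coefficients `M₁, …, M₈` are absolutely convergent, and
`∫_{-∞}^0 exp (-β_n τ) u₁ τ u₂ τ dτ = A + B ξ₁ + C ξ₂ + ξ₁ ξ₂ / (β₁ + β₂ - β_n)`. -/
theorem pm_expansion_scalar
    (βn β₁ β₂ : ℝ) (hβn : βn < 0)
    (hgap₁₂ : 0 < β₁ + β₂ - βn) (hgap₁ : 0 < β₁ - βn) (hgap₂ : 0 < β₂ - βn)
    (σ₁ σ₂ ξ₁ ξ₂ : ℝ)
    (W₁ W₂ : ℝ → ℝ) (hW₁_cont : Continuous W₁) (hW₂_cont : Continuous W₂)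
    (hW₁0 : W₁ 0 = 0) (hW₂0 : W₂ 0 = 0)
    (hW₁_growth : ∃ C > (0:ℝ), ∃ k : ℕ, ∀ τ ≤ (0:ℝ), |W₁ τ| ≤ C * (1 + |τ|) ^ k)
    (hW₂_growth : ∃ C > (0:ℝ), ∃ k : ℕ, ∀ τ ≤ (0:ℝ), |W₂ τ| ≤ C * (1 + |τ|) ^ k)
    (u₁ u₂ : ℝ → ℝ)
    (hu₁ : ∀ τ, u₁ τ = Real.exp (τ * β₁) * ξ₁ + σ₁ * W₁ τ
      - σ₁ * β₁ * ∫ τ' in τ..0, Real.exp ((τ - τ') * β₁) * W₁ τ')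
    (hu₂ : ∀ τ, u₂ τ = Real.exp (τ * β₂) * ξ₂ + σ₂ * W₂ τ
      - σ₂ * β₂ * ∫ τ' in τ..0, Real.exp ((τ - τ') * β₂) * W₂ τ') :
    IntegrableOn (fun τ => Real.exp (-βn * τ) * u₁ τ * u₂ τ) (Set.Iic 0) ∧
    IntegrableOn (fun τ => Real.exp (-βn * τ) * W₁ τ * W₂ τ) (Set.Iic 0) ∧
    IntegrableOn (fun τ => Real.exp (-βn * τ) * W₁ τ *
      ∫ τ' in τ..0, Real.exp ((τ - τ') * β₂) * W₂ τ') (Set.Iic 0) ∧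
    IntegrableOn (fun τ => Real.exp (-βn * τ) * W₂ τ *
      ∫ τ' in τ..0, Real.exp ((τ - τ') * β₁) * W₁ τ') (Set.Iic 0) ∧
    IntegrableOn (fun τ => Real.exp (-βn * τ) *
      (∫ τ' in τ..0, Real.exp ((τ - τ') * β₁) * W₁ τ') *
      (∫ τ' in τ..0, Real.exp ((τ - τ') * β₂) * W₂ τ')) (Set.Iic 0) ∧
    IntegrableOn (fun τ => Real.exp ((β₁ - βn) * τ) * W₂ τ) (Set.Iic 0) ∧
    IntegrableOn (fun τ => Real.exp ((β₁ - βn) * τ) *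
      ∫ τ' in τ..0, Real.exp ((τ - τ') * β₂) * W₂ τ') (Set.Iic 0) ∧
    IntegrableOn (fun τ => Real.exp ((β₂ - βn) * τ) * W₁ τ) (Set.Iic 0) ∧
    IntegrableOn (fun τ => Real.exp ((β₂ - βn) * τ) *
      ∫ τ' in τ..0, Real.exp ((τ - τ') * β₁) * W₁ τ') (Set.Iic 0) ∧
    (∫ τ in Set.Iic (0:ℝ), Real.exp (-βn * τ) * u₁ τ * u₂ τ)
      = (σ₁ * σ₂ * (∫ τ in Set.Iic (0:ℝ), Real.exp (-βn * τ) * W₁ τ * W₂ τ)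
          - σ₁ * σ₂ * β₂ * (∫ τ in Set.Iic (0:ℝ), Real.exp (-βn * τ) * W₁ τ *
              ∫ τ' in τ..0, Real.exp ((τ - τ') * β₂) * W₂ τ')
          - σ₁ * σ₂ * β₁ * (∫ τ in Set.Iic (0:ℝ), Real.exp (-βn * τ) * W₂ τ *
              ∫ τ' in τ..0, Real.exp ((τ - τ') * β₁) * W₁ τ')
          + σ₁ * σ₂ * β₁ * β₂ * (∫ τ in Set.Iic (0:ℝ), Real.exp (-βn * τ) *
              (∫ τ' in τ..0, Real.exp ((τ - τ') * β₁) * W₁ τ') *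
              (∫ τ' in τ..0, Real.exp ((τ - τ') * β₂) * W₂ τ')))
        + (σ₂ * (∫ τ in Set.Iic (0:ℝ), Real.exp ((β₁ - βn) * τ) * W₂ τ)
            - σ₂ * β₂ * (∫ τ in Set.Iic (0:ℝ), Real.exp ((β₁ - βn) * τ) *
                ∫ τ' in τ..0, Real.exp ((τ - τ') * β₂) * W₂ τ')) * ξ₁
        + (σ₁ * (∫ τ in Set.Iic (0:ℝ), Real.exp ((β₂ - βn) * τ) * W₁ τ)
            - σ₁ * β₁ * (∫ τ in Set.Iic (0:ℝ), Real.exp ((β₂ - βn) * τ) *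
                ∫ τ' in τ..0, Real.exp ((τ - τ') * β₁) * W₁ τ')) * ξ₂
        + ξ₁ * ξ₂ / (β₁ + β₂ - βn) :=
  pm_expansion_scalar_general βn β₁ β₂ hβn hgap₁₂ hgap₁ hgap₂ σ₁ σ₂ ξ₁ ξ₂ W₁ W₂ hW₁_cont hW₂_cont
    hW₁_growth hW₂_growth u₁ u₂ hu₁ hu₂
end

section
/- Let β < 0, σ ∈ ℝ, and let W : ℝ → ℝ be continuous with polynomial growth on all of ℝ (i.e., there exist C > 0 and k ∈ ℕ with |W(τ)| ≤ C(1+|τ|)^k for all τ ∈ ℝ). Then for every t ∈ ℝ the integral ∫_{−∞}^t e^{(t−s)β} W(s) ds converges absolutely, the function z(t) := σ W(t) + σβ ∫_{−∞}^t e^{(t−s)β} W(s) ds is continuous, and for all t ∈ ℝ it satisfies z(t) = z(0) + β ∫_0^t z(r) dr + σ (W(t) − W(0)), where the integral is the signed integral when t < 0. -/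
/-!
Write `F t = ∫_{-∞}^t e^{(t-s)β} W s ds = e^{tβ} ∫_{-∞}^t e^{-sβ} W s ds`. Polynomial
growth of `W` is beaten by the exponential weight, so the integral converges, and differentiating
the product gives `F' = βF + W`. Hence `z = σW + σβF = σF'`, so
`β ∫_0^t z = σβ (F t - F 0) = z t - z 0 - σ (W t - W 0)`.
-/

open MeasureTheory Real intervalIntegral Filter Asymptotics Set

lemma isLittleO_exp_neg_mul_atBot_of_polyGrowth {W : ℝ → ℝ} {C : ℝ} {k : ℕ}
    (hW : ∀ τ, |W τ| ≤ C * (1 + |τ|) ^ k) {b : ℝ} (hb : 0 < b) :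
    W =o[atBot] fun s => exp (-(b * s)) := by
  have hC : 0 ≤ C := by simpa using (abs_nonneg _).trans (hW 0)
  have hpoly : (fun x => W (-x)) =O[atTop] fun x => x ^ k := by
    refine IsBigO.of_bound (C * 2 ^ k) ?_
    filter_upwards [eventually_ge_atTop 1] with x hx
    calc ‖W (-x)‖ ≤ C * (1 + |x|) ^ k := by simpa using hW (-x)
      _ ≤ C * (2 * x) ^ k := by rw [abs_of_nonneg (by linarith)]; gcongr; linarith
      _ = C * 2 ^ k * ‖x ^ k‖ := by
        rw [norm_pow, norm_of_nonneg (by linarith), mul_pow, mul_assoc]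
  simpa [Function.comp_def] using ((hpoly.trans_isLittleO
    (isLittleO_pow_exp_pos_mul_atTop k hb)).comp_tendsto tendsto_neg_atBot_atTop)

lemma integrableOn_exp_mul_mul_Iic_of_polyGrowth {W : ℝ → ℝ} (hWc : Continuous W)
    {C : ℝ} {k : ℕ} (hW : ∀ τ, |W τ| ≤ C * (1 + |τ|) ^ k) {c : ℝ} (hc : 0 < c) (t : ℝ) :
    IntegrableOn (fun s => exp (c * s) * W s) (Iic t) := by
  have hO : (fun s => exp (c * s) * W s) =O[atBot] fun s => exp (c / 2 * s) := by
    have hWo := isLittleO_exp_neg_mul_atBot_of_polyGrowth hW (half_pos hc)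
    refine ((isBigO_refl (fun s => exp (c * s)) atBot).mul hWo.isBigO).congr_right ?_
    intro s
    rw [← exp_add]
    ring_nf
  have hloc : LocallyIntegrableOn (fun s => exp (c * s) * W s) (Iic t) :=
    (by fun_prop : Continuous fun s => exp (c * s) * W s).locallyIntegrable.locallyIntegrableOn _
  exact hloc.integrableOn_of_isBigO_atBot hO
    ⟨Iic 0, Iic_mem_atBot 0, integrableOn_exp_mul_Iic (half_pos hc) 0⟩

lemma hasDerivAt_integral_Iic {E : Type*} [NormedAddCommGroup E] [NormedSpace ℝ E]
    [CompleteSpace E] {g : ℝ → E} (hg : Continuous g) (hint : ∀ t, IntegrableOn g (Iic t))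
    (t : ℝ) : HasDerivAt (fun u => ∫ s in Iic u, g s) (g t) t := by
  have hsplit :
      (fun u => ∫ s in Iic u, g s) = fun u => (∫ s in Iic 0, g s) + ∫ s in 0..u, g s := by
    funext u
    rw [← integral_Iic_sub_Iic (hint 0) (hint u)]
    abel
  rw [hsplit]
  exact (hg.integral_hasStrictDerivAt 0 t).hasDerivAt.const_add _

lemma exp_sub_mul_mul (β t s w : ℝ) :
    exp ((t - s) * β) * w = exp (t * β) * (exp (-β * s) * w) := by
  rw [← mul_assoc, ← exp_add]
  ring_nf

lemma hasDerivAt_integral_Iic_exp_sub_mul {β : ℝ} {W : ℝ → ℝ} (hW : Continuous W)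
    (hint : ∀ t, IntegrableOn (fun s => exp (-β * s) * W s) (Iic t)) (t : ℝ) :
    HasDerivAt (fun u => ∫ s in Iic u, exp ((u - s) * β) * W s)
      (β * (∫ s in Iic t, exp ((t - s) * β) * W s) + W t) t := by
  have hfac : ∀ u, ∫ s in Iic u, exp ((u - s) * β) * W s
      = exp (u * β) * ∫ s in Iic u, exp (-β * s) * W s := fun u => by
    simp_rw [exp_sub_mul_mul]
    exact integral_const_mul _ _
  simp_rw [hfac]
  have hexp : HasDerivAt (fun u => exp (u * β)) (exp (t * β) * β) t := by
    simpa using ((hasDerivAt_id t).mul_const β).exp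
  refine (hexp.mul (hasDerivAt_integral_Iic (by fun_prop) hint t)).congr_deriv ?_
  rw [← mul_assoc (exp (t * β)), ← exp_add, show t * β + -β * t = 0 by ring, exp_zero]
  ring

lemma langevin_of_hasDerivAt {β σ : ℝ} {W F z : ℝ → ℝ} (hzc : Continuous z)
    (hF : ∀ t, HasDerivAt F (β * F t + W t) t) (hz : ∀ t, z t = σ * W t + σ * β * F t)
    (t : ℝ) :
    z t = z 0 + β * (∫ r in (0:ℝ)..t, z r) + σ * (W t - W 0) := by
  have hderiv : ∀ r, HasDerivAt (fun u => σ * F u) (z r) r := fun r => by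
    refine ((hF r).const_mul σ).congr_deriv ?_
    rw [hz]
    ring
  have hFTC : ∫ r in (0:ℝ)..t, z r = σ * F t - σ * F 0 :=
    integral_eq_sub_of_hasDerivAt (fun r _ => hderiv r) (hzc.intervalIntegrable _ _)
  rw [hFTC, hz t, hz 0]
  ring

/-- Pathwise stationary Ornstein–Uhlenbeck process. For `β < 0` and `W`
continuous of polynomial growth on `ℝ`, the integral `∫_{-∞}^t exp ((t - s) β) W s ds`
converges absolutely for each `t`, the function
`z t = σ W t + σ β ∫_{-∞}^t exp ((t - s) β) W s ds` is continuous, and it satisfies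
the Langevin integral equation `z t = z 0 + β ∫_0^t z r dr + σ (W t - W 0)`. -/
theorem stationary_OU_pathwise
    (β σ : ℝ) (hβ : β < 0) (W : ℝ → ℝ) (hW_cont : Continuous W)
    (hW_growth : ∃ C > (0:ℝ), ∃ k : ℕ, ∀ τ : ℝ, |W τ| ≤ C * (1 + |τ|) ^ k)
    (z : ℝ → ℝ)
    (hz : ∀ t, z t = σ * W t
      + σ * β * ∫ s in Set.Iic t, Real.exp ((t - s) * β) * W s) :
    (∀ t : ℝ, IntegrableOn (fun s => Real.exp ((t - s) * β) * W s) (Set.Iic t)) ∧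
    Continuous z ∧
    (∀ t : ℝ, z t = z 0 + β * (∫ r in (0:ℝ)..t, z r) + σ * (W t - W 0)) := by
  obtain ⟨C, -, k, hWk⟩ := hW_growth
  have hint : ∀ t, IntegrableOn (fun s => exp (-β * s) * W s) (Iic t) :=
    integrableOn_exp_mul_mul_Iic_of_polyGrowth hW_cont hWk (neg_pos.2 hβ)
  have hF := hasDerivAt_integral_Iic_exp_sub_mul hW_cont hint
  have hFc : Continuous fun t => ∫ s in Iic t, exp ((t - s) * β) * W s :=
    continuous_iff_continuousAt.2 fun t => (hF t).continuousAt
  have hzc : Continuous z := by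
    rw [funext hz]
    fun_prop
  refine ⟨fun t => ?_, hzc, langevin_of_hasDerivAt hzc hF hz⟩
  simp only [exp_sub_mul_mul]
  exact (hint t).const_mul (exp (t * β))
end

section
/- Let l > 0, γ ∈ ℝ, and let i₁, i₂ ≥ 1 be integers with i₁ ≠ i₂ and n = |i₁ − i₂|. With e_k(x) = √(2/l)·sin(kπx/l), one has −γ ∫_0^l e_{i₁}(x) · (d/dx) e_{i₂}(x) · e_n(x) dx = −γ i₂ π · sgn(i₁ − i₂) / (√2 · l^{3/2}). -/
open MeasureTheory Real intervalIntegral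

/-! The three eigenmodes combine, by the product-to-sum formulas, into four cosines
`cos (m π x / l)` with `m = i₁ ∓ n ± i₂`. Over `(0, l)` such a cosine integrates to `l` if `m = 0`
and to `0` otherwise. For `n = |i₁ - i₂|` the only vanishing frequency is `i₁ - n - i₂` if
`i₁ > i₂`, and `i₁ + n - i₂` (entering with a minus sign) if `i₁ < i₂`; this produces the sign. -/

theorem sin_mul_cos_mul_sin (a b c : ℝ) :
    sin a * cos b * sin c
      = (cos (a - c + b) + cos (a - c - b) - cos (a + c + b) - cos (a + c - b)) / 4 := by
  simp only [cos_add, cos_sub, sin_add, sin_sub]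
  ring

theorem integral_cos_int_mul_pi_div (l : ℝ) (m : ℤ) :
    ∫ x in (0 : ℝ)..l, cos (m * π * x / l) = if m = 0 then l else 0 := by
  rcases eq_or_ne m 0 with rfl | hm
  · simp
  rcases eq_or_ne l 0 with rfl | hl
  · simp
  have hω : (m : ℝ) * π / l ≠ 0 := by
    have : (m : ℝ) ≠ 0 := Int.cast_ne_zero.mpr hm
    positivity
  have hωl : (m : ℝ) * π / l * l = m * π := by field_simp
  have harg (x : ℝ) : (m : ℝ) * π * x / l = m * π / l * x := mul_div_right_comm _ _ _
  simp_rw [harg]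
  rw [integral_comp_mul_left cos hω, integral_cos, hωl, sin_int_mul_pi]
  simp [hm]

theorem hasDerivAt_sin_mul_div (k l x : ℝ) :
    HasDerivAt (fun y => sin (k * π * y / l)) (k * π / l * cos (k * π * x / l)) x := by
  have h := ((hasDerivAt_id x).const_mul (k * π / l)).sin
  convert h using 1
  · funext y; simp only [id_eq]; ring_nf
  · simp only [id_eq]; ring_nf

section

variable (l : ℝ)

/-- `∫₀ˡ cos (m π x / l) dx`, i.e. `l` times the Kronecker delta of `m`. -/
noncomputable def cosIntegral (m : ℤ) : ℝ := if m = 0 then l else 0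

theorem integral_sin_mul_cos_mul_sin (a b c : ℤ) :
    ∫ x in (0 : ℝ)..l, sin (a * π * x / l) * cos (b * π * x / l) * sin (c * π * x / l)
      = (cosIntegral l (a - c + b) + cosIntegral l (a - c - b)
          - cosIntegral l (a + c + b) - cosIntegral l (a + c - b)) / 4 := by
  have hcos (m : ℤ) : ∫ x in (0 : ℝ)..l, cos (m * π * x / l) = cosIntegral l m :=
    integral_cos_int_mul_pi_div l m
  have hint (m : ℤ) : IntervalIntegrable (fun x => cos (m * π * x / l)) volume 0 l :=
    (continuous_cos.comp (by fun_prop)).intervalIntegrable _ _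
  have hexpand (x : ℝ) :
      sin (a * π * x / l) * cos (b * π * x / l) * sin (c * π * x / l)
        = (cos (((a - c + b : ℤ) : ℝ) * π * x / l) + cos (((a - c - b : ℤ) : ℝ) * π * x / l)
            - cos (((a + c + b : ℤ) : ℝ) * π * x / l)
            - cos (((a + c - b : ℤ) : ℝ) * π * x / l)) / 4 := by
    rw [sin_mul_cos_mul_sin]
    push_cast
    ring_nf
  simp_rw [hexpand]
  rw [intervalIntegral.integral_div, integral_sub (((hint _).add (hint _)).sub (hint _)) (hint _),
    integral_sub ((hint _).add (hint _)) (hint _), integral_add (hint _) (hint _),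
    hcos, hcos, hcos, hcos]

theorem cosIntegral_resonance {i₁ i₂ n : ℕ} (hi₁ : 1 ≤ i₁) (hi₂ : 1 ≤ i₂)
    (hn : (n : ℤ) = |(i₁ : ℤ) - (i₂ : ℤ)|) :
    cosIntegral l (i₁ - n + i₂) + cosIntegral l (i₁ - n - i₂)
        - cosIntegral l (i₁ + n + i₂) - cosIntegral l (i₁ + n - i₂)
      = l * (((i₁ : ℤ) - i₂).sign : ℝ) := by
  unfold cosIntegral
  rcases lt_trichotomy i₁ i₂ with h | rfl | h
  · rw [hn, abs_of_neg (by omega), Int.sign_eq_neg_one_of_neg (by omega),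
      if_neg (by omega), if_neg (by omega), if_neg (by omega), if_pos (by omega)]
    simp
  · simp_all
  · rw [hn, abs_of_pos (by omega), Int.sign_eq_one_of_pos (by omega),
      if_neg (by omega), if_pos (by omega), if_neg (by omega), if_neg (by omega)]
    simp

end

theorem sqrt_two_div_pow_three_div_four {l : ℝ} (hl : 0 < l) :
    √(2 / l) ^ 3 / 4 = 1 / (√2 * l ^ ((3 : ℝ) / 2)) := by
  have hl32 : l ^ ((3 : ℝ) / 2) = l * √l := by
    rw [show (3 : ℝ) / 2 = 1 + 1 / 2 by norm_num, rpow_add hl, rpow_one, ← sqrt_eq_rpow]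
  have h2 : √2 ^ 2 = 2 := sq_sqrt (by norm_num)
  have hsl : √l ^ 2 = l := sq_sqrt hl.le
  have : √l ≠ 0 := by positivity
  rw [sqrt_div (by norm_num), hl32, div_pow]
  field_simp
  rw [hsl, show √2 ^ 4 = (√2 ^ 2) ^ 2 by ring, h2]
  ring

theorem burgers_interaction_diff_general
    (l γ : ℝ) (hl : 0 < l) (i₁ i₂ n : ℕ) (hi₁ : 1 ≤ i₁) (hi₂ : 1 ≤ i₂)
    (hn : (n : ℤ) = |(i₁ : ℤ) - (i₂ : ℤ)|)
    (e : ℕ → ℝ → ℝ)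
    (he : ∀ k x, e k x = Real.sqrt (2 / l) * Real.sin (k * Real.pi * x / l)) :
    -γ * ∫ x in (0:ℝ)..l, e i₁ x * deriv (e i₂) x * e n x
      = -(γ * i₂ * Real.pi * (((i₁ : ℤ) - (i₂ : ℤ)).sign : ℝ))
        / (Real.sqrt 2 * l ^ ((3:ℝ)/2)) := by
  have he' : e = fun (k : ℕ) x => √(2 / l) * sin (k * π * x / l) := funext₂ he
  have hderiv (x : ℝ) : deriv (e i₂) x = √(2 / l) * (i₂ * π / l * cos (i₂ * π * x / l)) := by
    rw [he']
    exact ((hasDerivAt_sin_mul_div _ l x).const_mul _).deriv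
  have hintegral := integral_sin_mul_cos_mul_sin l i₁ i₂ n
  rw [cosIntegral_resonance l hi₁ hi₂ hn] at hintegral
  push_cast at hintegral
  simp_rw [hderiv, he]
  have hrearrange (x : ℝ) :
      √(2 / l) * sin (i₁ * π * x / l) * (√(2 / l) * (i₂ * π / l * cos (i₂ * π * x / l)))
          * (√(2 / l) * sin (n * π * x / l))
        = √(2 / l) ^ 3 * (i₂ * π / l)
            * (sin (i₁ * π * x / l) * cos (i₂ * π * x / l) * sin (n * π * x / l)) := by
    ring
  simp_rw [hrearrange]
  rw [intervalIntegral.integral_const_mul, hintegral, div_eq_mul_one_div _ (√2 * _),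
    ← sqrt_two_div_pow_three_div_four hl]
  field_simp

/-- Burgers nonlinear interaction coefficient for `n = |i₁ - i₂|`,
`i₁ ≠ i₂`: with `e_k x = √(2/l) sin (kπx/l)`,
`-γ ∫_0^l e_{i₁} (e_{i₂})′ e_n dx = -γ i₂ π sgn (i₁ - i₂) / (√2 l^{3/2})`. -/
theorem burgers_interaction_diff
    (l γ : ℝ) (hl : 0 < l) (i₁ i₂ n : ℕ) (hi₁ : 1 ≤ i₁) (hi₂ : 1 ≤ i₂)
    (hne : i₁ ≠ i₂) (hn : (n : ℤ) = |(i₁ : ℤ) - (i₂ : ℤ)|)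
    (e : ℕ → ℝ → ℝ)
    (he : ∀ k x, e k x = Real.sqrt (2 / l) * Real.sin (k * Real.pi * x / l)) :
    -γ * ∫ x in (0:ℝ)..l, e i₁ x * deriv (e i₂) x * e n x
      = -(γ * i₂ * Real.pi * (((i₁ : ℤ) - (i₂ : ℤ)).sign : ℝ))
        / (Real.sqrt 2 * l ^ ((3:ℝ)/2)) :=
  burgers_interaction_diff_general l γ hl i₁ i₂ n hi₁ hi₂ hn e he
end
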